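/- For a positive definite matrix Θ₀ and symmetric matrix Δ such that Θ₀ + Δ is positive definite, log det(Θ₀) − log det(Θ₀ + Δ) = −Tr(Θ₀⁻¹ Δ) + vec(Δ)ᵀ [∫₀¹ (1−v) (Θ₀+vΔ)⁻¹ ⊗ (Θ₀+vΔ)⁻¹ dv] vec(Δ), where ⊗ denotes the Kronecker product and vec(Δ) is the vectorization of Δ. -/

import Mathlib

/-!
On the segment `v ↦ Θ₀ + v • Δ`, which stays positive definite by convexity, the function
`f v = log det (Θ₀ + v • Δ)` has `f' v = tr (A⁻¹ Δ)` by Jacobi's formula and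
`f'' v = -tr (A⁻¹ Δ A⁻¹ Δ)` since `(A⁻¹)' = -A⁻¹ Δ A⁻¹`, where `A = Θ₀ + v • Δ`.
Taylor's formula with integral remainder gives `f 0 - f 1 = -f' 0 - ∫₀¹ (1 - v) f'' v dv`, and for
symmetric `S` and `Δ` the Kronecker quadratic form `vec Δ ⬝ (S ⊗ S) vec Δ` is `tr (S Δ S Δ)`.
-/

open Matrix MeasureTheory
open scoped Kronecker

attribute [local instance] Matrix.frobeniusNormedAddCommGroup Matrix.frobeniusNormedSpace

attribute [local instance] Matrix.frobeniusNormedRing Matrix.frobeniusNormedAlgebra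

open Set

theorem taylor_integral_remainder_two {E : Type*} [NormedAddCommGroup E] [NormedSpace ℝ E]
    [CompleteSpace E] {f f' f'' : ℝ → E} {a b : ℝ}
    (hf : ∀ x ∈ uIcc a b, HasDerivAt f (f' x) x) (hf' : ∀ x ∈ uIcc a b, HasDerivAt f' (f'' x) x)
    (hint : IntervalIntegrable (fun x => (b - x) • f'' x) volume a b) :
    f b = f a + (b - a) • f' a + ∫ x in a..b, (b - x) • f'' x := by
  have hφ : ∀ x ∈ uIcc a b, HasDerivAt (fun y => f y + (b - y) • f' y) ((b - x) • f'' x) x := by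
    intro x hx
    refine ((hf x hx).add (((hasDerivAt_id x).const_sub b).smul (hf' x hx))).congr_deriv ?_
    simp
  rw [intervalIntegral.integral_eq_sub_of_hasDerivAt hφ hint]
  simp

theorem HasDerivAt.ringInverse {𝕜 R : Type*} [NontriviallyNormedField 𝕜] [NormedRing R]
    [HasSummableGeomSeries R] [NormedAlgebra 𝕜 R] {f : 𝕜 → R} {f' : R} {x : 𝕜}
    (hf : HasDerivAt f f' x) (hx : IsUnit (f x)) :
    HasDerivAt (fun y => Ring.inverse (f y))
      (-(Ring.inverse (f x) * f' * Ring.inverse (f x))) x := by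
  obtain ⟨u, hu⟩ := hx
  have hinv := hasFDerivAt_ringInverse (𝕜 := 𝕜) u
  rw [← Ring.inverse_unit, hu] at hinv
  simpa [Function.comp_def] using hinv.comp_hasDerivAt x hf

theorem ContinuousOn.matrix_kronecker {X R l m n p : Type*} [TopologicalSpace X]
    [TopologicalSpace R] [Mul R] [ContinuousMul R] {s : Set X} {A : X → Matrix l m R}
    {B : X → Matrix n p R} (hA : ContinuousOn A s) (hB : ContinuousOn B s) :
    ContinuousOn (fun x => A x ⊗ₖ B x) s :=
  continuousOn_pi.2 fun ik => continuousOn_pi.2 fun jl =>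
    ((continuous_apply_apply ik.1 jl.1).comp_continuousOn hA).mul
      ((continuous_apply_apply ik.2 jl.2).comp_continuousOn hB)

namespace Matrix

theorem PosDef.add_smul_of_mem_Icc {n : Type*} {A Δ : Matrix n n ℝ} (hA : A.PosDef)
    (hAΔ : (A + Δ).PosDef) {t : ℝ} (ht : t ∈ Icc 0 1) : (A + t • Δ).PosDef := by
  have hcombo : A + t • Δ = (1 - t) • A + t • (A + Δ) := by
    rw [smul_add, sub_smul, one_smul]; abel
  rw [hcombo]
  rcases ht.2.lt_or_eq with ht1 | rfl
  · exact (hA.smul (sub_pos.2 ht1)).add_posSemidef (hAΔ.posSemidef.smul ht.1)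
  · simpa using hAΔ

variable {n : Type*} [Fintype n]

theorem vec_dotProduct_kronecker_mulVec_vec_of_isSymm {R : Type*} [CommSemiring R]
    {S X : Matrix n n R} (hS : S.IsSymm) (hX : X.IsSymm) :
    vec X ⬝ᵥ (S ⊗ₖ S) *ᵥ vec X = (S * X * (S * X)).trace := by
  rw [kronecker_mulVec_vec, vec_dotProduct_vec, hS.eq, hX.eq, trace_mul_comm, Matrix.mul_assoc]

theorem dotProduct_setIntegral_mulVec {m : Type*} [Fintype m] {K : ℝ → Matrix m n ℝ} {a b : ℝ}
    (hK : ContinuousOn K (Icc a b)) (x : m → ℝ) (y : n → ℝ) :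
    x ⬝ᵥ (∫ t in Icc a b, K t) *ᵥ y = ∫ t in Icc a b, x ⬝ᵥ K t *ᵥ y := by
  let L : Matrix m n ℝ →ₗ[ℝ] ℝ :=
    { toFun := fun M => x ⬝ᵥ M *ᵥ y
      map_add' := fun M N => by simp [add_mulVec, dotProduct_add]
      map_smul' := fun c M => by simp [smul_mulVec, dotProduct_smul] }
  exact (L.toContinuousLinearMap.integral_comp_comm (hK.integrableOn_compact isCompact_Icc)).symm

theorem vec_dotProduct_setIntegral_kronecker_mulVec_vec {S : ℝ → Matrix n n ℝ} {w : ℝ → ℝ}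
    {X : Matrix n n ℝ} {a b : ℝ} (hab : a ≤ b) (hw : ContinuousOn w (Icc a b))
    (hS : ContinuousOn S (Icc a b)) (hS_symm : ∀ t ∈ Icc a b, (S t).IsSymm) (hX : X.IsSymm) :
    vec X ⬝ᵥ (∫ t in Icc a b, w t • (S t ⊗ₖ S t)) *ᵥ vec X
      = ∫ t in a..b, w t * (S t * X * (S t * X)).trace := by
  rw [dotProduct_setIntegral_mulVec (K := fun t => w t • (S t ⊗ₖ S t))
      (hw.smul (hS.matrix_kronecker hS)),
    integral_Icc_eq_integral_Ioc, ← intervalIntegral.integral_of_le hab]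
  refine intervalIntegral.integral_congr fun t ht => ?_
  rw [uIcc_of_le hab] at ht
  simp only [smul_mulVec, dotProduct_smul, vec_dotProduct_kronecker_mulVec_vec_of_isSymm
    (hS_symm t ht) hX, smul_eq_mul]

theorem _root_.HasDerivAt.matrix_trace {𝕜 : Type*} [RCLike 𝕜] {f : 𝕜 → Matrix n n 𝕜}
    {f' : Matrix n n 𝕜} {x : 𝕜} (hf : HasDerivAt f f' x) :
    HasDerivAt (fun y => (f y).trace) f'.trace x :=
  (traceLinearMap n 𝕜 𝕜).toContinuousLinearMap.hasFDerivAt.comp_hasDerivAt x hf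

variable [DecidableEq n]

theorem _root_.HasDerivAt.matrix_inv {𝕜 : Type*} [RCLike 𝕜] {f : 𝕜 → Matrix n n 𝕜}
    {f' : Matrix n n 𝕜} {x : 𝕜} (hf : HasDerivAt f f' x) (hx : IsUnit (f x)) :
    HasDerivAt (fun y => (f y)⁻¹) (-((f x)⁻¹ * f' * (f x)⁻¹)) x := by
  simp_rw [nonsing_inv_eq_ringInverse]
  exact hf.ringInverse hx

open Polynomial in
theorem hasDerivAt_det_one_add_smul {𝕜 : Type*} [NontriviallyNormedField 𝕜]
    (M : Matrix n n 𝕜) : HasDerivAt (fun t : 𝕜 => (1 + t • M).det) M.trace 0 := by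
  set p := (det (1 + (X : 𝕜[X]) • M.map C)).divX.divX
  have hp : HasDerivAt (fun t => 1 + M.trace * t + p.eval t * t ^ 2)
      (M.trace * 1 + (p.derivative.eval 0 * 0 ^ 2 + p.eval 0 * (2 * 0 ^ 1 * 1))) 0 :=
    (((hasDerivAt_id 0).const_mul M.trace).const_add 1).add
      ((p.hasDerivAt 0).mul ((hasDerivAt_id 0).pow 2))
  rw [funext fun t : 𝕜 => det_one_add_smul t M]
  simpa using hp

theorem hasDerivAt_det_add_smul {𝕜 : Type*} [NontriviallyNormedField 𝕜] (A Δ : Matrix n n 𝕜)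
    (t : 𝕜) (ht : IsUnit (A + t • Δ)) :
    HasDerivAt (fun s => (A + s • Δ).det)
      ((A + t • Δ).det * ((A + t • Δ)⁻¹ * Δ).trace) t := by
  set B := A + t • Δ with hB_def
  have hB : B * B⁻¹ = 1 := mul_nonsing_inv B ((isUnit_iff_isUnit_det B).1 ht)
  have hfactor : ∀ s, A + s • Δ = B * (1 + (s - t) • (B⁻¹ * Δ)) := fun s => by
    rw [Matrix.mul_add, Matrix.mul_one, Matrix.mul_smul, ← Matrix.mul_assoc, hB, Matrix.one_mul,
      sub_smul, hB_def]
    abel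
  have hshift : HasDerivAt (fun s => (1 + (s - t) • (B⁻¹ * Δ)).det) (B⁻¹ * Δ).trace t := by
    refine HasDerivAt.comp_sub_const (f := fun r => (1 + r • (B⁻¹ * Δ)).det) t t ?_
    simpa using hasDerivAt_det_one_add_smul (B⁻¹ * Δ)
  simpa only [hfactor, det_mul] using hshift.const_mul B.det

theorem hasDerivAt_log_det_add_smul (A Δ : Matrix n n ℝ) (t : ℝ) (ht : (A + t • Δ).det ≠ 0) :
    HasDerivAt (fun s => Real.log (A + s • Δ).det) ((A + t • Δ)⁻¹ * Δ).trace t := by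
  have hunit : IsUnit (A + t • Δ) := (isUnit_iff_isUnit_det _).2 ht.isUnit
  simpa [ht] using (hasDerivAt_det_add_smul A Δ t hunit).log ht

theorem hasDerivAt_inv_add_smul {𝕜 : Type*} [RCLike 𝕜] (A Δ : Matrix n n 𝕜) (t : 𝕜)
    (ht : IsUnit (A + t • Δ)) :
    HasDerivAt (fun s => (A + s • Δ)⁻¹) (-((A + t • Δ)⁻¹ * Δ * (A + t • Δ)⁻¹)) t :=
  (((hasDerivAt_id t).smul_const Δ).const_add A |>.congr_deriv (one_smul 𝕜 Δ)).matrix_inv ht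

theorem continuousOn_inv_add_smul {𝕜 : Type*} [RCLike 𝕜] (A Δ : Matrix n n 𝕜) {s : Set 𝕜}
    (hs : ∀ t ∈ s, IsUnit (A + t • Δ)) : ContinuousOn (fun t => (A + t • Δ)⁻¹) s :=
  fun t ht => (hasDerivAt_inv_add_smul A Δ t (hs t ht)).continuousAt.continuousWithinAt

theorem hasDerivAt_trace_inv_add_smul_mul {𝕜 : Type*} [RCLike 𝕜] (A Δ : Matrix n n 𝕜) (t : 𝕜)
    (ht : IsUnit (A + t • Δ)) :
    HasDerivAt (fun s => ((A + s • Δ)⁻¹ * Δ).trace)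
      (-((A + t • Δ)⁻¹ * Δ * ((A + t • Δ)⁻¹ * Δ)).trace) t := by
  simpa [Matrix.mul_assoc] using ((hasDerivAt_inv_add_smul A Δ t ht).mul_const Δ).matrix_trace

theorem log_det_add_eq_add_trace_sub_integral {A Δ : Matrix n n ℝ} (hA : A.PosDef)
    (hAΔ : (A + Δ).PosDef) :
    Real.log (A + Δ).det = Real.log A.det + (A⁻¹ * Δ).trace
      - ∫ v in (0 : ℝ)..1, (1 - v) * ((A + v • Δ)⁻¹ * Δ * ((A + v • Δ)⁻¹ * Δ)).trace := by
  have hpos : ∀ v ∈ uIcc (0 : ℝ) 1, (A + v • Δ).PosDef := fun v hv =>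
    hA.add_smul_of_mem_Icc hAΔ (by rwa [uIcc_of_le zero_le_one] at hv)
  have hS := continuousOn_inv_add_smul A Δ fun v hv => (hpos v hv).isUnit
  have hint : IntervalIntegrable
      (fun v => (1 - v) • -((A + v • Δ)⁻¹ * Δ * ((A + v • Δ)⁻¹ * Δ)).trace) volume 0 1 :=
    ((continuousOn_const.sub continuousOn_id).smul (continuous_id.matrix_trace.comp_continuousOn
      ((hS.mul continuousOn_const).mul (hS.mul continuousOn_const))).neg).intervalIntegrable
  have htaylor := taylor_integral_remainder_two
    (fun v hv => hasDerivAt_log_det_add_smul A Δ v (hpos v hv).det_pos.ne')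
    (fun v hv => hasDerivAt_trace_inv_add_smul_mul A Δ v (hpos v hv).isUnit) hint
  simp only [one_smul, zero_smul, add_zero, sub_zero, smul_eq_mul, mul_neg, one_mul,
    intervalIntegral.integral_neg] at htaylor
  rw [htaylor, sub_eq_add_neg]

end Matrix

/-- Second-order Taylor expansion of `log det` with integral remainder in
Kronecker-product form. -/
theorem logdet_taylor_expansion {m : ℕ}
    (Θ₀ Δ : Matrix (Fin m) (Fin m) ℝ) (h₀ : Θ₀.PosDef) (hΔ : Δ.IsSymm)
    (h₁ : (Θ₀ + Δ).PosDef) :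
    Real.log Θ₀.det - Real.log (Θ₀ + Δ).det =
      -((Θ₀⁻¹ * Δ).trace) +
        (fun p : Fin m × Fin m => Δ p.2 p.1) ⬝ᵥ
          ((∫ v in Set.Icc (0 : ℝ) 1,
              (1 - v) • ((Θ₀ + v • Δ)⁻¹ ⊗ₖ (Θ₀ + v • Δ)⁻¹)).mulVec
            (fun p : Fin m × Fin m => Δ p.2 p.1)) := by
  have hpos : ∀ v ∈ Icc (0 : ℝ) 1, (Θ₀ + v • Δ).PosDef := fun v hv =>
    h₀.add_smul_of_mem_Icc h₁ hv
  change _ = _ + vec Δ ⬝ᵥ _ *ᵥ vec Δ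
  rw [vec_dotProduct_setIntegral_kronecker_mulVec_vec (w := fun v => 1 - v) zero_le_one
      (continuousOn_const.sub continuousOn_id)
      (continuousOn_inv_add_smul Θ₀ Δ fun v hv => (hpos v hv).isUnit)
      (fun v hv => (isHermitian_iff_isSymm.1 (hpos v hv).isHermitian).inv) hΔ,
    log_det_add_eq_add_trace_sub_integral h₀ h₁]
  ring
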